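/- arXiv:1605.05613 — 2 statements merged into one kernel-verified Lean document; each statement's English description precedes it below -/
import Mathlib

section
/- Let i = (i_1, …, i_m) be a word. Then the set of elements (F^0, …, F^m) of BS^i in which every subspace F^k(a) (for 0 ≤ k ≤ m and 0 ≤ a ≤ n) is a coordinate subspace is finite of cardinality 2^m. -/
noncomputable section

/-- The coordinate subspace `span{e₁, …, e_k}` of `ℂⁿ` (standard basis `eᵢ = Pi.single i 1`). -/
def stdSub (n k : ℕ) : Submodule ℂ (Fin n → ℂ) :=
  Submodule.span ℂ {v : Fin n → ℂ | ∃ t : Fin n, (t : ℕ) < k ∧ v = Pi.single t 1}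

/-- A complete flag in `ℂⁿ`: a monotone function `{0,…,n} → Submodule ℂ ℂⁿ`
with `dim F(k) = k`. -/
def IsCompleteFlag (n : ℕ) (F : Fin (n + 1) → Submodule ℂ (Fin n → ℂ)) : Prop :=
  Monotone F ∧ ∀ k : Fin (n + 1), Module.finrank ℂ (F k) = (k : ℕ)

/-- The standard flag `E(k) = span{e₁, …, e_k}`. -/
def stdFlag (n : ℕ) : Fin (n + 1) → Submodule ℂ (Fin n → ℂ) := fun k => stdSub n (k : ℕ)

/-- Magyar's description of the Bott–Samelson set `BS^i` for a word `i = (i_1, …, i_m)`: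
sequences of complete flags `(F^0, …, F^m)` with `F^0 = E` the standard flag, and for each
`1 ≤ k ≤ m`, `F^k(a) = F^{k-1}(a)` for all `a ≠ i_k`.  (The word is indexed so that
`i ⟨k⟩` for `k : Fin m` is the letter `i_{k+1}`.) -/
def InBS (n m : ℕ) (i : Fin m → ℕ)
    (F : Fin (m + 1) → Fin (n + 1) → Submodule ℂ (Fin n → ℂ)) : Prop :=
  (∀ k, IsCompleteFlag n (F k)) ∧ F 0 = stdFlag n ∧
    ∀ k : Fin m, ∀ a : Fin (n + 1), (a : ℕ) ≠ i k → F k.succ a = F k.castSucc a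

/-- A coordinate subspace of `ℂⁿ`: the span of a subset of the standard basis vectors. -/
def IsCoordSub (n : ℕ) (W : Submodule ℂ (Fin n → ℂ)) : Prop :=
  ∃ S : Set (Fin n), W = Submodule.span ℂ ((fun t : Fin n => Pi.single t (1 : ℂ)) '' S)

/-! A complete flag of coordinate subspaces is `a ↦ span {e_{σ 0}, …, e_{σ (a - 1)}}` for a
permutation `σ`. In a step with letter `j` only `F(j)` may move, and it is squeezed between
`F(j - 1)` and `F(j + 1)`, whose coordinate sets differ by `σ (j - 1)` and `σ j`; so the next flag
is that of `σ` or of `σ * s_j`, with `s_j` exchanging the positions `j - 1` and `j`. Hence the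
coordinate points of `BS^i` are the flags of the partial products of the subwords of
`s_{i_1} ⋯ s_{i_m}`, and the subword is recovered as the set of steps at which the flag moves. -/

open Equiv

theorem Pi.spanSubset_le_spanSubset_iff {R ι : Type*} [Semiring R] [Nontrivial R] [Finite ι]
    {s t : Set ι} : Pi.spanSubset R s ≤ Pi.spanSubset R t ↔ s ⊆ t := by
  refine ⟨fun h x hx => ?_, fun h => Submodule.span_mono (Set.image_mono h)⟩
  exact (Pi.basisFun R ι).self_mem_span_image.1 (h (Submodule.subset_span ⟨x, hx, rfl⟩))

theorem Pi.spanSubset_injective {R ι : Type*} [Semiring R] [Nontrivial R] [Finite ι] :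
    Function.Injective (Pi.spanSubset R : Set ι → Submodule R (ι → R)) := fun _ _ h =>
  (Pi.spanSubset_le_spanSubset_iff.1 h.le).antisymm (Pi.spanSubset_le_spanSubset_iff.1 h.ge)

theorem isCoordSub_iff {n : ℕ} {W : Submodule ℂ (Fin n → ℂ)} :
    IsCoordSub n W ↔ ∃ S : Set (Fin n), W = Pi.spanSubset ℂ S := by
  have : ⇑(Pi.basisFun ℂ (Fin n)) = fun t => Pi.single t 1 := funext (Pi.basisFun_apply ℂ _)
  simp only [IsCoordSub, Pi.spanSubset, this]

theorem Set.eq_insert_or_eq_insert_of_ncard_eq_succ {α : Type*} {A S : Set α} {x y : α}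
    (hA : A.Finite) (hAS : A ⊆ S) (hS : S ⊆ insert x (insert y A))
    (hcard : S.ncard = A.ncard + 1) : S = insert x A ∨ S = insert y A := by
  by_cases hx : x ∈ S ∧ x ∉ A
  · refine .inl (Set.eq_of_subset_of_ncard_le (Set.insert_subset hx.1 hAS) ?_ ?_).symm
    · rw [hcard, Set.ncard_insert_of_notMem hx.2 hA]
    · exact ((hA.insert y).insert x).subset hS
  · have hSy : S ⊆ insert y A := fun z hz => by
      rcases hS hz with rfl | hz
      · exact Set.mem_insert_of_mem _ (by tauto)
      · exact hz
    exact .inr (Set.eq_of_subset_of_ncard_le hSy (hcard ▸ Set.ncard_insert_le y A) (hA.insert y))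

def permSet {n : ℕ} (σ : Perm (Fin n)) (a : ℕ) : Set (Fin n) := σ '' {p | (p : ℕ) < a}

theorem mem_permSet {n a : ℕ} {σ : Perm (Fin n)} {x : Fin n} :
    x ∈ permSet σ a ↔ ((σ.symm x : Fin n) : ℕ) < a := Set.mem_image_equiv

theorem ncard_permSet {n a : ℕ} (σ : Perm (Fin n)) (ha : a ≤ n) : (permSet σ a).ncard = a := by
  rw [permSet, Set.ncard_image_of_injective _ σ.injective, ← Fin.range_castLE ha,
    Set.ncard_range_of_injective (Fin.castLE_injective ha), Nat.card_eq_fintype_card,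
    Fintype.card_fin]

theorem permSet_mono {n : ℕ} (σ : Perm (Fin n)) : Monotone (permSet σ) :=
  fun _ _ h => Set.image_mono fun _ hp => lt_of_lt_of_le hp h

theorem permSet_succ {n a : ℕ} (σ : Perm (Fin n)) (ha : a < n) :
    permSet σ (a + 1) = insert (σ ⟨a, ha⟩) (permSet σ a) := by
  ext x
  simp only [mem_permSet, Set.mem_insert_iff, ← σ.symm_apply_eq, Fin.ext_iff]
  omega

theorem permSet_mul_swap {n a : ℕ} (σ : Perm (Fin n)) {p q : Fin n}
    (h : (p : ℕ) < a ↔ (q : ℕ) < a) : permSet (σ * swap p q) a = permSet σ a := by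
  ext x
  rw [mem_permSet, mem_permSet]
  change ((swap p q).symm (σ.symm x) : ℕ) < a ↔ _
  rw [symm_swap, swap_apply_def]
  split_ifs with h1 h2 <;> simp_all

-- The simple transposition `s_j` on 0-indexed positions, hence exchanging `j - 1` and `j`.
def adjSwap (n j : ℕ) : Perm (Fin n) :=
  if h : j < n then swap ⟨j - 1, by omega⟩ ⟨j, h⟩ else 1

section adjSwap

variable {n j : ℕ} (σ : Perm (Fin n))

theorem permSet_mul_adjSwap_of_ne {a : ℕ} (hj : j < n) (ha : a ≠ j) :
    permSet (σ * adjSwap n j) a = permSet σ a := by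
  rw [adjSwap, dif_pos hj]
  exact permSet_mul_swap σ (by simp only; omega)

theorem permSet_mul_adjSwap_self (hj0 : 0 < j) (hj : j < n) :
    permSet (σ * adjSwap n j) j = insert (σ ⟨j, hj⟩) (permSet σ (j - 1)) := by
  have h := permSet_succ (σ * adjSwap n j) (a := j - 1) (by omega)
  rw [Nat.sub_add_cancel hj0] at h
  rw [h, permSet_mul_adjSwap_of_ne σ hj (by omega)]
  simp [adjSwap, hj]

theorem permSet_mul_adjSwap_self_ne (hj0 : 0 < j) (hj : j < n) :
    permSet (σ * adjSwap n j) j ≠ permSet σ j := fun h => by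
  have hmem := h ▸ permSet_mul_adjSwap_self σ hj0 hj ▸ Set.mem_insert (σ ⟨j, hj⟩) _
  simp [mem_permSet] at hmem

theorem permSet_eq_or_eq_mul_adjSwap (hj0 : 0 < j) (hj : j < n) {S : Set (Fin n)}
    (hlow : permSet σ (j - 1) ⊆ S) (hhigh : S ⊆ permSet σ (j + 1)) (hcard : S.ncard = j) :
    S = permSet σ j ∨ S = permSet (σ * adjSwap n j) j := by
  have hself := permSet_succ σ (a := j - 1) (by omega)
  rw [Nat.sub_add_cancel hj0] at hself
  rw [permSet_succ σ hj, hself] at hhigh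
  rw [hself, permSet_mul_adjSwap_self σ hj0 hj]
  refine (Set.eq_insert_or_eq_insert_of_ncard_eq_succ (Set.toFinite _) hlow hhigh ?_).symm
  rw [hcard, ncard_permSet σ (by omega)]
  omega

end adjSwap

def coordFlag {n : ℕ} (σ : Perm (Fin n)) : Fin (n + 1) → Submodule ℂ (Fin n → ℂ) :=
  fun a => Pi.spanSubset ℂ (permSet σ a)

section coordFlag

variable {n : ℕ}

theorem isCompleteFlag_coordFlag (σ : Perm (Fin n)) : IsCompleteFlag n (coordFlag σ) :=
  ⟨fun _ _ h => Pi.spanSubset_le_spanSubset_iff.2 (permSet_mono σ h), fun a => by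
    rw [coordFlag, Pi.dim_spanSubset, ncard_permSet σ (Nat.lt_succ_iff.1 a.isLt)]⟩

theorem isCoordSub_coordFlag (σ : Perm (Fin n)) (a : Fin (n + 1)) :
    IsCoordSub n (coordFlag σ a) :=
  isCoordSub_iff.2 ⟨_, rfl⟩

theorem coordFlag_one : coordFlag (1 : Perm (Fin n)) = stdFlag n := by
  funext a
  simp only [coordFlag, stdFlag, stdSub, Pi.spanSubset, permSet, Perm.coe_one, Set.image_id]
  congr 1
  ext v
  simp [eq_comm]

theorem coordFlag_mul_adjSwap_apply_of_ne {j : ℕ} (σ : Perm (Fin n)) (hj : j < n)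
    {a : Fin (n + 1)} (ha : (a : ℕ) ≠ j) : coordFlag (σ * adjSwap n j) a = coordFlag σ a :=
  congrArg (Pi.spanSubset ℂ) (permSet_mul_adjSwap_of_ne σ hj ha)

theorem coordFlag_mul_adjSwap_ne {j : ℕ} (σ : Perm (Fin n)) (hj0 : 0 < j) (hj : j < n) :
    coordFlag (σ * adjSwap n j) ≠ coordFlag σ := fun h =>
  permSet_mul_adjSwap_self_ne σ hj0 hj (Pi.spanSubset_injective (congrFun h ⟨j, by omega⟩))

theorem eq_coordFlag_or_eq_coordFlag_mul_adjSwap {j : ℕ} (σ : Perm (Fin n)) (hj0 : 0 < j)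
    (hj : j < n) {G : Fin (n + 1) → Submodule ℂ (Fin n → ℂ)} (hG : IsCompleteFlag n G)
    (hGj : IsCoordSub n (G ⟨j, by omega⟩))
    (hGσ : ∀ a : Fin (n + 1), (a : ℕ) ≠ j → G a = coordFlag σ a) :
    G = coordFlag σ ∨ G = coordFlag (σ * adjSwap n j) := by
  obtain ⟨S, hS⟩ := isCoordSub_iff.1 hGj
  have hlow : permSet σ (j - 1) ⊆ S := by
    rw [← Pi.spanSubset_le_spanSubset_iff (R := ℂ), ← hS]
    exact (hGσ ⟨j - 1, by omega⟩ (by simp only; omega)).symm.le.trans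
      (hG.1 (Fin.mk_le_mk.2 (Nat.sub_le j 1)))
  have hhigh : S ⊆ permSet σ (j + 1) := by
    rw [← Pi.spanSubset_le_spanSubset_iff (R := ℂ), ← hS]
    exact (hG.1 (Fin.mk_le_mk.2 (Nat.le_succ j))).trans (hGσ ⟨j + 1, by omega⟩ (by simp)).le
  have hcard : S.ncard = j := by rw [← Pi.dim_spanSubset (R := ℂ), ← hS, hG.2]
  have hext : ∀ τ : Perm (Fin n),
      (∀ a : Fin (n + 1), (a : ℕ) ≠ j → coordFlag τ a = coordFlag σ a) →
      S = permSet τ j → G = coordFlag τ := fun τ hτ hSτ => by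
    funext a
    by_cases ha : (a : ℕ) = j
    · rw [show a = ⟨j, Nat.lt_succ_of_lt hj⟩ from Fin.ext ha, hS, hSτ]
      rfl
    · rw [hGσ a ha, hτ a ha]
  exact (permSet_eq_or_eq_mul_adjSwap σ hj0 hj hlow hhigh hcard).imp (hext σ fun _ _ => rfl)
    (hext _ fun _ => coordFlag_mul_adjSwap_apply_of_ne σ hj)

end coordFlag

def subwordPoint (n : ℕ) {m : ℕ} (i : Fin m → ℕ) (b : Fin m → Bool) :
    Fin (m + 1) → Fin (n + 1) → Submodule ℂ (Fin n → ℂ) :=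
  fun k => coordFlag (Fin.partialProd (fun t => if b t then adjSwap n (i t) else 1) k)

section subwordPoint

variable {n m : ℕ} {i : Fin m → ℕ}

theorem subwordPoint_succ (b : Fin m → Bool) (t : Fin m) :
    subwordPoint n i b t.succ =
      coordFlag (Fin.partialProd (fun t => if b t then adjSwap n (i t) else 1) t.castSucc *
        if b t then adjSwap n (i t) else 1) := by
  rw [subwordPoint, Fin.partialProd_succ]

theorem subwordPoint_succ_ne_iff (hi : ∀ t, 0 < i t ∧ i t < n) (b : Fin m → Bool) (t : Fin m) :
    subwordPoint n i b t.succ ≠ subwordPoint n i b t.castSucc ↔ b t = true := by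
  rw [subwordPoint_succ]
  cases b t
  · simp [subwordPoint]
  · simpa [subwordPoint] using coordFlag_mul_adjSwap_ne _ (hi t).1 (hi t).2

theorem subwordPoint_injective (hi : ∀ t, 0 < i t ∧ i t < n) :
    Function.Injective (subwordPoint n i) := fun b b' h => funext fun t =>
  Bool.eq_iff_iff.2 <|
    (subwordPoint_succ_ne_iff hi b t).symm.trans (h ▸ subwordPoint_succ_ne_iff hi b' t)

theorem inBS_subwordPoint (hi : ∀ t, 0 < i t ∧ i t < n) (b : Fin m → Bool) :
    InBS n m i (subwordPoint n i b) := by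
  refine ⟨fun k => isCompleteFlag_coordFlag _, ?_, fun t a ha => ?_⟩
  · simp [subwordPoint, coordFlag_one]
  · rw [subwordPoint_succ]
    cases b t
    · simp [subwordPoint]
    · exact coordFlag_mul_adjSwap_apply_of_ne _ (hi t).2 ha

theorem exists_subwordPoint_eq (hi : ∀ t, 0 < i t ∧ i t < n)
    {F : Fin (m + 1) → Fin (n + 1) → Submodule ℂ (Fin n → ℂ)} (hF : InBS n m i F)
    (hC : ∀ k a, IsCoordSub n (F k a)) : ∃ b, subwordPoint n i b = F := by
  obtain ⟨hflag, hF0, hstep⟩ := hF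
  set b : Fin m → Bool := fun t => !decide (F t.succ = F t.castSucc) with hb
  refine ⟨b, funext fun k => ?_⟩
  induction k using Fin.induction with
  | zero => simp [subwordPoint, hF0, coordFlag_one]
  | succ t ih =>
    rcases eq_coordFlag_or_eq_coordFlag_mul_adjSwap _ (hi t).1 (hi t).2 (hflag t.succ) (hC _ _)
      fun a ha => (hstep t a ha).trans (congrFun ih.symm a) with h | h
    · have hbt : b t = false := by simp [hb, h.trans ih]
      rw [subwordPoint_succ, hbt, if_neg Bool.false_ne_true, mul_one]
      exact h.symm
    · have hbt : b t = true := by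
        simpa [hb] using h ▸ ih ▸ coordFlag_mul_adjSwap_ne _ (hi t).1 (hi t).2
      rw [subwordPoint_succ, hbt, if_pos rfl]
      exact h.symm

end subwordPoint

theorem stmt3_general (n m : ℕ) (i : Fin m → ℕ)
    (hi : ∀ t, 1 ≤ i t ∧ i t ≤ n - 1) :
    {F : Fin (m + 1) → Fin (n + 1) → Submodule ℂ (Fin n → ℂ) |
        InBS n m i F ∧ ∀ k a, IsCoordSub n (F k a)}.Finite ∧
      {F : Fin (m + 1) → Fin (n + 1) → Submodule ℂ (Fin n → ℂ) |
        InBS n m i F ∧ ∀ k a, IsCoordSub n (F k a)}.ncard = 2 ^ m := by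
  have hletter : ∀ t, 0 < i t ∧ i t < n := fun t => by have := hi t; omega
  have hset : {F : Fin (m + 1) → Fin (n + 1) → Submodule ℂ (Fin n → ℂ) |
      InBS n m i F ∧ ∀ k a, IsCoordSub n (F k a)} = Set.range (subwordPoint n i) := by
    ext F
    refine ⟨fun ⟨hF, hC⟩ => exists_subwordPoint_eq hletter hF hC, ?_⟩
    rintro ⟨b, rfl⟩
    exact ⟨inBS_subwordPoint hletter b, fun k => isCoordSub_coordFlag _⟩
  rw [hset, Set.ncard_range_of_injective (subwordPoint_injective hletter)]
  exact ⟨Set.finite_range _, by simp⟩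

/-- the set of points of `BS^i` all of whose subspaces are coordinate
subspaces is finite, of cardinality `2^m`. -/
theorem stmt3 (n m : ℕ) (hn : 2 ≤ n) (i : Fin m → ℕ)
    (hi : ∀ t, 1 ≤ i t ∧ i t ≤ n - 1) :
    {F : Fin (m + 1) → Fin (n + 1) → Submodule ℂ (Fin n → ℂ) |
        InBS n m i F ∧ ∀ k a, IsCoordSub n (F k a)}.Finite ∧
      {F : Fin (m + 1) → Fin (n + 1) → Submodule ℂ (Fin n → ℂ) |
        InBS n m i F ∧ ∀ k a, IsCoordSub n (F k a)}.ncard = 2 ^ m :=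
  stmt3_general n m i hi
end
end

section
/- Fix a with 1 ≤ a ≤ n − 2, and let F and G be complete flags in V = ℂⁿ with F(b) = G(b) for every b ∉ {a, a+1}. Then there exist complete flags X and Y such that X(b) = F(b) for all b ≠ a, Y(b) = X(b) for all b ≠ a+1, and G(b) = Y(b) for all b ≠ a. (That is, G can be reached from F by a chain of single-position modifications following the word (a, a+1, a); geometrically, the projection f_T from the Bott–Samelson variety of a rhombic tiling T to the hexagon-tile variety Z_{T_H} is surjective.) -/
noncomputable section

/-!
`F(a+1)` and `G(a+1)` are hyperplanes of the common `(a+2)`-space `F(a+2) = G(a+2)`, so their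
intersection has dimension at least `a` and contains `F(a-1) = G(a-1)`. Any `a`-dimensional `W`
between `F(a-1)` and `F(a+1) ∩ G(a+1)` fits into both flags at position `a`: put `X = F` and
`Y = G` with position `a` replaced by `W`.
-/

open Module Submodule Function

theorem Monotone.update_of_le_of_le {α β : Type*} [PartialOrder α] [Preorder β] [DecidableEq α]
    {f : α → β} (hf : Monotone f) {i : α} {x : β}
    (hlo : ∀ j < i, f j ≤ x) (hhi : ∀ j, i < j → x ≤ f j) : Monotone (update f i x) := by
  intro j k hjk
  rcases eq_or_ne j i with rfl | hj
  · rcases eq_or_ne k j with rfl | hk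
    · exact le_rfl
    · rw [update_self, update_of_ne hk]
      exact hhi k (hjk.lt_of_ne hk.symm)
  · rw [update_of_ne hj]
    rcases eq_or_ne k i with rfl | hk
    · rw [update_self]
      exact hlo j (hjk.lt_of_ne hj)
    · rw [update_of_ne hk]
      exact hf hjk

section FiniteDimensional

variable {K V : Type*} [DivisionRing K] [AddCommGroup V] [Module K V] [FiniteDimensional K V]

theorem Submodule.exists_finrank_eq_succ_of_le_of_finrank_lt {U T : Submodule K V} (hUT : U ≤ T)
    (hdim : finrank K U < finrank K T) :
    ∃ W : Submodule K V, U ≤ W ∧ W ≤ T ∧ finrank K W = finrank K U + 1 := by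
  obtain ⟨v, hvT, hvU⟩ := SetLike.exists_of_lt (lt_of_le_of_ne hUT (by rintro rfl; omega))
  exact ⟨U ⊔ K ∙ v, le_sup_left, sup_le hUT ((span_singleton_le_iff_mem v T).2 hvT),
    finrank_sup_span_singleton hvU⟩

theorem Submodule.finrank_add_finrank_le_finrank_inf_add {A B T : Submodule K V}
    (hA : A ≤ T) (hB : B ≤ T) :
    finrank K A + finrank K B ≤ finrank K ↥(A ⊓ B) + finrank K T := by
  rw [← finrank_sup_add_finrank_inf_eq, add_comm]
  exact Nat.add_le_add_left (finrank_mono (sup_le hA hB)) _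

theorem Submodule.exists_finrank_eq_succ_between_inf {U A B T : Submodule K V} (hUA : U ≤ A)
    (hUB : U ≤ B) (hA : A ≤ T) (hB : B ≤ T)
    (hdim : finrank K U + finrank K T < finrank K A + finrank K B) :
    ∃ W : Submodule K V, U ≤ W ∧ W ≤ A ⊓ B ∧ finrank K W = finrank K U + 1 :=
  exists_finrank_eq_succ_of_le_of_finrank_lt (le_inf hUA hUB)
    (by have := finrank_add_finrank_le_finrank_inf_add hA hB; omega)

end FiniteDimensional

theorem IsCompleteFlag.update {n : ℕ} {F : Fin (n + 1) → Submodule ℂ (Fin n → ℂ)}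
    (hF : IsCompleteFlag n F) {lo i hi : Fin (n + 1)} (hlo : (lo : ℕ) + 1 = i)
    (hhi : (i : ℕ) + 1 = hi) {W : Submodule ℂ (Fin n → ℂ)} (hloW : F lo ≤ W)
    (hWhi : W ≤ F hi) (hW : finrank ℂ W = i) :
    IsCompleteFlag n (update F i W) := by
  refine ⟨hF.1.update_of_le_of_le (fun j hj => ?_) (fun j hj => ?_), fun k => ?_⟩
  · exact (hF.1 (Fin.le_def.2 (by have := Fin.lt_def.1 hj; omega))).trans hloW
  · exact hWhi.trans (hF.1 (Fin.le_def.2 (by have := Fin.lt_def.1 hj; omega)))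
  · rcases eq_or_ne k i with rfl | hk
    · rwa [update_self]
    · rw [update_of_ne hk, hF.2 k]

theorem stmt5_general (n : ℕ) (a : ℕ) (ha1 : 1 ≤ a) (ha2 : a ≤ n - 2)
    (F G : Fin (n + 1) → Submodule ℂ (Fin n → ℂ))
    (hF : IsCompleteFlag n F) (hG : IsCompleteFlag n G)
    (hFG : ∀ b : Fin (n + 1), (b : ℕ) ≠ a → (b : ℕ) ≠ a + 1 → F b = G b) :
    ∃ X Y : Fin (n + 1) → Submodule ℂ (Fin n → ℂ),
      IsCompleteFlag n X ∧ IsCompleteFlag n Y ∧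
      (∀ b : Fin (n + 1), (b : ℕ) ≠ a → X b = F b) ∧
      (∀ b : Fin (n + 1), (b : ℕ) ≠ a + 1 → Y b = X b) ∧
      (∀ b : Fin (n + 1), (b : ℕ) ≠ a → G b = Y b) := by
  let lo : Fin (n + 1) := ⟨a - 1, by omega⟩
  let i : Fin (n + 1) := ⟨a, by omega⟩
  let hi : Fin (n + 1) := ⟨a + 1, by omega⟩
  let top : Fin (n + 1) := ⟨a + 2, by omega⟩
  have hlo : F lo = G lo := hFG lo (by simp [lo]; omega) (by simp [lo])
  have htop : F top = G top := hFG top (by simp [top]) (by simp [top])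
  obtain ⟨W, hloW, hWI, hWdim⟩ := exists_finrank_eq_succ_between_inf
    (U := F lo) (A := F hi) (B := G hi) (T := F top) (hF.1 (Fin.mk_le_mk.2 (by omega)))
    (hlo ▸ hG.1 (Fin.mk_le_mk.2 (by omega))) (hF.1 (Fin.mk_le_mk.2 (by omega)))
    (htop ▸ hG.1 (Fin.mk_le_mk.2 (by omega)))
    (by simp only [hF.2, hG.2, lo, hi, top]; omega)
  have hWdim' : finrank ℂ W = i := by rw [hWdim, hF.2]; simp only [lo, i]; omega
  have hne (b : Fin (n + 1)) (hb : (b : ℕ) ≠ a) : b ≠ i := by rintro rfl; exact hb rfl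
  refine ⟨update F i W, update G i W,
    hF.update (by simp only [lo, i]; omega) rfl hloW (hWI.trans inf_le_left) hWdim',
    hG.update (by simp only [lo, i]; omega) rfl (hlo ▸ hloW) (hWI.trans inf_le_right) hWdim',
    fun b hb => update_of_ne (hne b hb) _ _, fun b hb => ?_,
    fun b hb => (update_of_ne (hne b hb) _ _).symm⟩
  rcases eq_or_ne b i with rfl | hbi
  · rw [update_self, update_self]
  · rw [update_of_ne hbi, update_of_ne hbi, hFG b (fun h => hbi (Fin.ext h)) hb]

/-- if complete flags `F`, `G` agree except possibly in positions `a`, `a+1`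
(with `1 ≤ a ≤ n-2`), then `G` can be reached from `F` by a chain of single-position
modifications following the word `(a, a+1, a)`. -/
theorem stmt5 (n : ℕ) (hn : 2 ≤ n) (a : ℕ) (ha1 : 1 ≤ a) (ha2 : a ≤ n - 2)
    (F G : Fin (n + 1) → Submodule ℂ (Fin n → ℂ))
    (hF : IsCompleteFlag n F) (hG : IsCompleteFlag n G)
    (hFG : ∀ b : Fin (n + 1), (b : ℕ) ≠ a → (b : ℕ) ≠ a + 1 → F b = G b) :
    ∃ X Y : Fin (n + 1) → Submodule ℂ (Fin n → ℂ),
      IsCompleteFlag n X ∧ IsCompleteFlag n Y ∧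
      (∀ b : Fin (n + 1), (b : ℕ) ≠ a → X b = F b) ∧
      (∀ b : Fin (n + 1), (b : ℕ) ≠ a + 1 → Y b = X b) ∧
      (∀ b : Fin (n + 1), (b : ℕ) ≠ a → G b = Y b) :=
  stmt5_general n a ha1 ha2 F G hF hG hFG
end
end
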